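/- For every integer s ≥ 2 and every graph G on n ≥ 1 vertices, gn(G,s) = n − 1 if and only if G is the complete graph K_n. -/

import Mathlib

open SimpleGraph

/-- A strategy for the guessing game on `G` with `s` colors: a family of guessing
functions, one per vertex, where each vertex's guess depends only on the colors
of the vertices in its (open) neighborhood. -/
def IsGuessingStrategy {V : Type*} (G : SimpleGraph V) (s : ℕ)
    (f : V → (V → Fin s) → Fin s) : Prop :=
  ∀ (v : V) (c₁ c₂ : V → Fin s), (∀ u, G.Adj v u → c₁ u = c₂ u) → f v c₁ = f v c₂

/-- The maximum, over all strategies for the guessing game on `G` with `s` colors,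
of the number of fixed points of the strategy (colorings where every vertex
guesses its own color correctly). -/
noncomputable def maxFixedPoints {V : Type*} (G : SimpleGraph V) (s : ℕ) : ℕ :=
  sSup {n : ℕ | ∃ f : V → (V → Fin s) → Fin s, IsGuessingStrategy G s f ∧
    n = Nat.card {c : V → Fin s // ∀ v, f v c = c v}}

/-- The guessing number of `G` with `s` colors: the logarithm base `s` of the
maximum number of fixed points of a strategy. -/
noncomputable def guessingNumber {V : Type*} (G : SimpleGraph V) (s : ℕ) : ℝ :=
  Real.logb s (maxFixedPoints G s)

/-- The join `K_k ⊕ E_{n-k}`: the first `k` vertices form a clique and are joined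
to all other vertices; the remaining `n - k` vertices form an independent set. -/
def cliqueJoinEmpty (n k : ℕ) : SimpleGraph (Fin n) :=
  SimpleGraph.fromRel (fun u _ => (u : ℕ) < k)

/-- The extremal number `ex(n, gn_s ≥ a)`: the maximum number of edges over all
graphs on `n` vertices whose guessing number with `s` colors is `< a`. -/
noncomputable def exGN (n s : ℕ) (a : ℝ) : ℕ :=
  sSup {m : ℕ | ∃ G : SimpleGraph (Fin n),
    guessingNumber G s < a ∧ m = Nat.card G.edgeSet}

/-- `G` is `(gn_s ≥ a)`-saturated: `gn(G,s) < a` but adding any missing edge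
raises the guessing number to at least `a`. -/
def GNSaturated {V : Type*} (G : SimpleGraph V) (s : ℕ) (a : ℝ) : Prop :=
  guessingNumber G s < a ∧
    ∀ u w : V, u ≠ w → ¬G.Adj u w →
      a ≤ guessingNumber (G ⊔ SimpleGraph.fromEdgeSet {s(u, w)}) s

/-- The saturation number `sat(n, gn_s ≥ a)`: the minimum number of edges over
all `(gn_s ≥ a)`-saturated graphs on `n` vertices. -/
noncomputable def satGN (n s : ℕ) (a : ℝ) : ℕ :=
  sInf {m : ℕ | ∃ G : SimpleGraph (Fin n),
    GNSaturated G s a ∧ m = Nat.card G.edgeSet}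

/-- The disjoint union `H + E_{n-h}` of a graph `H` on `h` vertices with `n - h`
isolated vertices, realized on `Fin n`. -/
def withIsolated {h : ℕ} (H : SimpleGraph (Fin h)) (n : ℕ) : SimpleGraph (Fin n) :=
  SimpleGraph.fromRel (fun u v =>
    ∃ (hu : (u : ℕ) < h) (hv : (v : ℕ) < h), H.Adj ⟨u, hu⟩ ⟨v, hv⟩)

/-- `K*_{a,a}`: the complete bipartite graph `K_{a,a}` with one subdivided edge.
Vertices `0, …, a-1` are `x_1, …, x_a`; vertices `a, …, 2a-1` are `y_1, …, y_a`;
vertex `2a` is the subdivision vertex `v_0`, adjacent exactly to `x_1` and `y_1`.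
The edge `x_1 y_1` is removed. -/
def Kstar (a : ℕ) : SimpleGraph (Fin (2 * a + 1)) :=
  SimpleGraph.fromRel (fun u v =>
    ((u : ℕ) < a ∧ a ≤ (v : ℕ) ∧ (v : ℕ) < 2 * a ∧ ¬((u : ℕ) = 0 ∧ (v : ℕ) = a)) ∨
    ((u : ℕ) = 2 * a ∧ ((v : ℕ) = 0 ∨ (v : ℕ) = a)))

/-- Add `b` dominating vertices to a graph `H` on `m` vertices: the first `b`
vertices are adjacent to everything else (and each other), the remaining `m`
vertices induce a copy of `H`. -/
def withDominating {m : ℕ} (H : SimpleGraph (Fin m)) (b : ℕ) :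
    SimpleGraph (Fin (b + m)) :=
  SimpleGraph.fromRel (fun u v =>
    (u : ℕ) < b ∨ (v : ℕ) < b ∨
      ∃ (hu : b ≤ (u : ℕ)) (hv : b ≤ (v : ℕ)),
        H.Adj ⟨(u : ℕ) - b, by have := u.isLt; omega⟩
          ⟨(v : ℕ) - b, by have := v.isLt; omega⟩)

/-- `F` is a minimal graph with `gn_s ≥ a`: its guessing number with `s` colors
is at least `a`, but every proper subgraph has guessing number `< a`. -/
def MinimalGN {V : Type*} [Finite V] (F : SimpleGraph V) (s : ℕ) (a : ℝ) : Prop :=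
  a ≤ guessingNumber F s ∧
    ∀ H : F.Subgraph, H ≠ ⊤ → guessingNumber H.coe s < a

/-! A fixed point is determined by its colours off any independent set `I`, because each vertex
of `I` guesses from colours outside `I`; hence every strategy has at most `s ^ (n - #I)` fixed
points. A missing edge `uw` gives the independent set `{u, w}` and so at most `s ^ (n - 2)`.
On `K_n`, letting every vertex guess minus the sum of the other colours modulo `s` makes all
`s ^ (n - 1)` zero-sum colourings fixed, which meets the bound for a single vertex. -/

open Finset

section FixedPoints

variable {V : Type*} {G : SimpleGraph V} {s : ℕ} {f : V → (V → Fin s) → Fin s}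

theorem IsGuessingStrategy.card_fixedPoints_le_of_isIndepSet [Fintype V]
    (hf : IsGuessingStrategy G s f) {I : Finset V} (hI : G.IsIndepSet (I : Set V)) :
    Nat.card {c : V → Fin s // ∀ v, f v c = c v} ≤ s ^ (Fintype.card V - #I) := by
  classical
  have hinj : Function.Injective
      fun (c : {c : V → Fin s // ∀ v, f v c = c v}) (x : ↥(Iᶜ : Finset V)) => c.1 x := by
    rintro ⟨c₁, hc₁⟩ ⟨c₂, hc₂⟩ h
    have hout : ∀ x ∉ I, c₁ x = c₂ x := fun x hx => congrFun h ⟨x, mem_compl.2 hx⟩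
    refine Subtype.ext (funext fun v => ?_)
    by_cases hv : v ∈ I
    · change c₁ v = c₂ v
      rw [← hc₁ v, ← hc₂ v]
      exact hf v c₁ c₂ fun u huv => hout u fun hu => hI hv hu (G.ne_of_adj huv) huv
    · exact hout v hv
  simpa using Nat.card_le_card_of_injective _ hinj

theorem maxFixedPoints_le {m : ℕ}
    (h : ∀ f, IsGuessingStrategy G s f → Nat.card {c : V → Fin s // ∀ v, f v c = c v} ≤ m) :
    maxFixedPoints G s ≤ m :=
  csSup_le' fun _ ⟨f, hf, hm⟩ => hm ▸ h f hf

theorem IsGuessingStrategy.card_fixedPoints_le_maxFixedPoints [Finite V]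
    (hf : IsGuessingStrategy G s f) :
    Nat.card {c : V → Fin s // ∀ v, f v c = c v} ≤ maxFixedPoints G s :=
  le_csSup ⟨Nat.card (V → Fin s), fun _ ⟨_, _, hm⟩ => hm ▸ Finite.card_subtype_le _⟩ ⟨f, hf, rfl⟩

theorem maxFixedPoints_pos [Finite V] [NeZero s] : 0 < maxFixedPoints G s := by
  have hconst : IsGuessingStrategy G s fun _ _ => 0 := fun _ _ _ _ => rfl
  refine lt_of_lt_of_le ?_ hconst.card_fixedPoints_le_maxFixedPoints
  have : Nonempty {c : V → Fin s // ∀ v, 0 = c v} := ⟨⟨0, fun _ => rfl⟩⟩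
  exact Nat.card_pos

end FixedPoints

section Bounds

variable {V : Type*} [Fintype V] {G : SimpleGraph V} {s : ℕ}

theorem maxFixedPoints_le_of_isIndepSet {I : Finset V} (hI : G.IsIndepSet (I : Set V)) :
    maxFixedPoints G s ≤ s ^ (Fintype.card V - #I) :=
  maxFixedPoints_le fun _ hf => hf.card_fixedPoints_le_of_isIndepSet hI

theorem maxFixedPoints_le_of_not_adj {u w : V} (huw : u ≠ w) (h : ¬G.Adj u w) :
    maxFixedPoints G s ≤ s ^ (Fintype.card V - 2) := by
  classical
  have hI : G.IsIndepSet ({u, w} : Finset V) := by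
    rw [coe_pair, SimpleGraph.isIndepSet_iff, Set.pairwise_pair]
    exact fun _ => ⟨h, fun h' => h h'.symm⟩
  simpa [card_pair huw] using maxFixedPoints_le_of_isIndepSet hI

theorem maxFixedPoints_lt_of_ne_top (hs : 1 < s) (hG : G ≠ ⊤) :
    maxFixedPoints G s < s ^ (Fintype.card V - 1) := by
  obtain ⟨u, w, huw, hadj⟩ := SimpleGraph.ne_top_iff_exists_not_adj.mp hG
  have : Nontrivial V := ⟨u, w, huw⟩
  have hcard := Fintype.one_lt_card (α := V)
  calc maxFixedPoints G s ≤ s ^ (Fintype.card V - 2) := maxFixedPoints_le_of_not_adj huw hadj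
    _ < s ^ (Fintype.card V - 1) := Nat.pow_lt_pow_right hs (by omega)

theorem maxFixedPoints_le_pow_card_sub_one [Nonempty V] :
    maxFixedPoints G s ≤ s ^ (Fintype.card V - 1) := by
  classical
  obtain ⟨v⟩ := ‹Nonempty V›
  simpa using maxFixedPoints_le_of_isIndepSet (G := G) (s := s) (I := {v}) (by simp)

end Bounds

section Complete

variable {V : Type*} [Fintype V] {s : ℕ} [NeZero s]

theorem isGuessingStrategy_top_neg_sum [DecidableEq V] :
    IsGuessingStrategy (⊤ : SimpleGraph V) s fun v c => -∑ u : {u // u ≠ v}, c u :=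
  fun _ _ _ h => congrArg Neg.neg (Fintype.sum_congr _ _ fun u => h u (Ne.symm u.2))

theorem eq_neg_sum_subtype_ne_of_sum_eq_zero [DecidableEq V] {c : V → Fin s} (hc : ∑ u, c u = 0) (v : V) :
    -∑ u : {u // u ≠ v}, c u = c v := by
  rw [Fintype.sum_eq_add_sum_subtype_ne c v, add_eq_zero_iff_eq_neg] at hc
  exact hc.symm

theorem maxFixedPoints_top [Nonempty V] :
    maxFixedPoints (⊤ : SimpleGraph V) s = s ^ (Fintype.card V - 1) := by
  classical
  obtain ⟨v⟩ := ‹Nonempty V›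
  refine le_antisymm maxFixedPoints_le_pow_card_sub_one ?_
  let extend (g : {u // u ≠ v} → Fin s) : V → Fin s :=
    fun u => if h : u = v then -∑ x, g x else g ⟨u, h⟩
  have extend_ne (g : {u // u ≠ v} → Fin s) (x : {u // u ≠ v}) : extend g x = g x := dif_neg x.2
  have sum_extend (g : {u // u ≠ v} → Fin s) : ∑ u, extend g u = 0 := by
    rw [Fintype.sum_eq_add_sum_subtype_ne _ v]
    simp [extend, extend_ne]
  have hinj : Function.Injective fun g =>
      (⟨extend g, eq_neg_sum_subtype_ne_of_sum_eq_zero (sum_extend g)⟩ :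
        {c : V → Fin s // ∀ w, -∑ u : {u // u ≠ w}, c u = c w}) := by
    intro g₁ g₂ h
    funext x
    rw [← extend_ne g₁, ← extend_ne g₂]
    exact congrFun (congrArg Subtype.val h) x
  calc s ^ (Fintype.card V - 1) = Nat.card ({u // u ≠ v} → Fin s) := by simp
    _ ≤ _ := Nat.card_le_card_of_injective _ hinj
    _ ≤ _ := isGuessingStrategy_top_neg_sum.card_fixedPoints_le_maxFixedPoints

theorem maxFixedPoints_eq_pow_card_sub_one_iff [Nonempty V] {G : SimpleGraph V} (hs : 1 < s) :
    maxFixedPoints G s = s ^ (Fintype.card V - 1) ↔ G = ⊤ :=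
  ⟨fun h => by_contra fun hG => (maxFixedPoints_lt_of_ne_top hs hG).ne h,
    fun hG => hG ▸ maxFixedPoints_top⟩

end Complete

theorem guessingNumber_eq_natCast_iff {V : Type*} {G : SimpleGraph V} {s : ℕ} (hs : 1 < s)
    (hpos : 0 < maxFixedPoints G s) (k : ℕ) :
    guessingNumber G s = k ↔ maxFixedPoints G s = s ^ k := by
  rw [guessingNumber, Real.logb_eq_iff_rpow_eq (by positivity) (by exact_mod_cast hs.ne')
    (by exact_mod_cast hpos), Real.rpow_natCast, eq_comm]
  exact_mod_cast Iff.rfl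

/-- For `s ≥ 2` and a graph `G` on `n ≥ 1` vertices, `gn(G,s) = n - 1` iff `G`
is the complete graph `K_n`. -/
theorem guessingNumber_eq_iff_complete (n s : ℕ) (hn : 1 ≤ n) (hs : 2 ≤ s)
    (G : SimpleGraph (Fin n)) :
    guessingNumber G s = (n : ℝ) - 1 ↔ G = ⊤ := by
  have : NeZero n := ⟨by omega⟩
  have : NeZero s := ⟨by omega⟩
  have hk : (n : ℝ) - 1 = ((n - 1 : ℕ) : ℝ) := by rw [Nat.cast_sub hn, Nat.cast_one]
  rw [hk, guessingNumber_eq_natCast_iff hs maxFixedPoints_pos]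
  simpa using maxFixedPoints_eq_pow_card_sub_one_iff (G := G) hs
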